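/- Let n ≥ 1 and l ≥ 0 be integers and let w be a further indeterminate. Then, in the field ℚ(w, X_1,…,X_n), det_{1≤i,j≤n}( X_i^{j−l−n−1}(1+X_i)^{j−1}(1+wX_i)^{n−j} − X_i^{−j+l+n}(1+X_i^{−1})^{j−1}(1+wX_i^{−1})^{n−j} ) = ∏_{1≤i<j≤n}(X_j + X_j^{−1} − X_i − X_i^{−1}) · ∏_{i=1}^n (1 − X_i^{−1}) · det_{1≤i,j≤n}( b_{i,j} ), where b_{i,j} = Σ_{p=0}^{j−1} Σ_{q=0}^{n−j} w^{n−j−q} C(j−1,p) C(n−j,q) · [ sgn(p−q−l) · h_{|p−q−l|−i}(X_1, X_1^{−1}, …, X_i, X_i^{−1}) + sgn(p−q−l−1) · h_{|p−q−l−1|−i}(X_1, X_1^{−1}, …, X_i, X_i^{−1}) ]. -/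

import Mathlib

noncomputable section

/-- The complete homogeneous symmetric polynomial `h_d(Y_1,…,Y_N)`: the sum of all
monomials of degree `d`. -/
def hcomp {A : Type*} [CommRing A] (N d : ℕ) (Y : Fin N → A) : A :=
  ∑ k ∈ Finset.univ.filter (fun k : Fin N → Fin (d + 1) => ∑ i, (k i : ℕ) = d),
    ∏ i, Y i ^ (k i : ℕ)

/-- `h_d` for `d ∈ ℤ`, with `h_d = 0` for `d < 0`. -/
def hz {A : Type*} [CommRing A] (N : ℕ) (d : ℤ) (Y : Fin N → A) : A :=
  if 0 ≤ d then hcomp N d.toNat Y else 0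

/-- The field `ℚ(w, X_1, …, X_n)` of rational functions. -/
abbrev RF (n : ℕ) : Type := FractionRing (MvPolynomial (Fin n ⊕ Unit) ℚ)

/-- The variable `X_i`. -/
def Xv (n : ℕ) (i : Fin n) : RF n :=
  algebraMap (MvPolynomial (Fin n ⊕ Unit) ℚ) (RF n) (MvPolynomial.X (Sum.inl i))

/-- The variable `w`. -/
def wv (n : ℕ) : RF n :=
  algebraMap (MvPolynomial (Fin n ⊕ Unit) ℚ) (RF n) (MvPolynomial.X (Sum.inr ()))

/-- The `2(i+1)` arguments `X_1, X_1⁻¹, …, X_{i+1}, X_{i+1}⁻¹` (0-indexed `i < n`). -/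
def args (n i : ℕ) (hi : i < n) : Fin (2 * (i + 1)) → RF n := fun t =>
  if t.1 % 2 = 0 then Xv n ⟨t.1 / 2, by omega⟩ else (Xv n ⟨t.1 / 2, by omega⟩)⁻¹

/-- The entry `b_{i,j}` (with `i, j` 0-indexed, paper's indices being `i+1, j+1`). -/
def bent (n l : ℕ) (i j : Fin n) : RF n :=
  ∑ p ∈ Finset.range ((j : ℕ) + 1), ∑ q ∈ Finset.range (n - (j : ℕ)),
    wv n ^ (n - 1 - (j : ℕ) - q) *
      (Nat.choose (j : ℕ) p : RF n) * (Nat.choose (n - 1 - (j : ℕ)) q : RF n) *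
      (((Int.sign ((p : ℤ) - q - l) : ℤ) : RF n) *
          hz (2 * ((i : ℕ) + 1))
            ((((p : ℤ) - q - l).natAbs : ℤ) - ((i : ℕ) + 1)) (args n (i : ℕ) i.2) +
        ((Int.sign ((p : ℤ) - q - l - 1) : ℤ) : RF n) *
          hz (2 * ((i : ℕ) + 1))
            ((((p : ℤ) - q - l - 1).natAbs : ℤ) - ((i : ℕ) + 1)) (args n (i : ℕ) i.2))

/-!
Write `x = X_k`. Expanding the two binomial powers turns each entry into a combination of
`x^(m-1) - x^(-m)` with `m = p - q - l`. Since `∑_d h_d(x, x⁻¹) z^d = 1 / P_x(z)` with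
`P_x(z) = (1 - x z)(1 - x⁻¹ z) = 1 - (x + x⁻¹) z + z²`, comparing coefficients in
`(1 - x⁻¹)(1 + z) / P_x(z) = 1 / (1 - x z) - x⁻¹ / (1 - x⁻¹ z)` gives
`x^(m-1) - x^(-m) = (1 - x⁻¹)(sgn m · h_(|m|-1)(x, x⁻¹) + sgn(m-1) · h_(|m-1|-1)(x, x⁻¹))`.

With `Y_t = X_t + X_t⁻¹`, the identity `1/P_a - 1/P_b = (Y_a - Y_b) z / (P_a P_b)` telescopes to
Newton interpolation in the nodes `Y_t`:
`1/P_(X_k) = ∑_(i ≤ k) ∏_(t < i) (Y_k - Y_t) z^(i-1) ∏_(t ≤ i) 1/P_(X_t)`, that is,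
`h_d(X_k, X_k⁻¹) = ∑_(i ≤ k) ∏_(t < i) (Y_k - Y_t) h_(d-i+1)(X_1, X_1⁻¹, …, X_i, X_i⁻¹)`.
So the matrix is `diag(1 - X_k⁻¹) · N · (b_(i,j))` with `N_(k,i) = ∏_(t < i) (Y_k - Y_t)` for
`i ≤ k` and `0` otherwise, a lower triangular matrix of determinant `∏_(i < j) (Y_j - Y_i)`.
-/

open PowerSeries Finset

section CommRing
variable {R : Type*} [CommRing R]

def geomSeries (a : R) : R⟦X⟧ := mk fun m => a ^ m

theorem one_sub_C_mul_X_mul_geomSeries (a : R) : (1 - C a * X) * geomSeries a = 1 := by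
  ext (_ | m)
  · simp [geomSeries]
  · rw [sub_mul, one_mul, map_sub, mul_comm (C a), mul_assoc, coeff_succ_X_mul, coeff_C_mul]
    simp [geomSeries, pow_succ']

def coeffZ (d : ℤ) : R⟦X⟧ →ₗ[R] R := if 0 ≤ d then coeff d.toNat else 0

theorem coeffZ_of_nonneg {d : ℤ} (hd : 0 ≤ d) (F : R⟦X⟧) :
    coeffZ d F = coeff d.toNat F := by
  simp [coeffZ, hd]

theorem coeffZ_of_neg {d : ℤ} (hd : d < 0) (F : R⟦X⟧) : coeffZ d F = 0 := by
  simp [coeffZ, not_le.mpr hd]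

theorem coeffZ_C_mul (d : ℤ) (c : R) (F : R⟦X⟧) : coeffZ d (C c * F) = c * coeffZ d F := by
  rw [← smul_eq_C_mul, map_smul, smul_eq_mul]

theorem coeffZ_X_pow_mul (d : ℤ) (i : ℕ) (F : R⟦X⟧) :
    coeffZ d (X ^ i * F) = coeffZ (d - i) F := by
  rcases lt_or_ge d 0 with hd | hd
  · rw [coeffZ_of_neg hd, coeffZ_of_neg (by omega)]
  rw [coeffZ_of_nonneg hd, coeff_X_pow_mul']
  split_ifs with h
  · rw [coeffZ_of_nonneg (by omega), show d.toNat - i = (d - i).toNat by omega]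
  · rw [coeffZ_of_neg (by omega)]

theorem coeffZ_X_mul (d : ℤ) (F : R⟦X⟧) : coeffZ d (X * F) = coeffZ (d - 1) F := by
  simpa using coeffZ_X_pow_mul d 1 F

theorem hcomp_eq_coeff_prod_geomSeries (N d : ℕ) (Y : Fin N → R) :
    hcomp N d Y = coeff d (∏ i, geomSeries (Y i)) := by
  classical
  have lt_of_mem : ∀ l ∈ finsuppAntidiag (univ : Finset (Fin N)) d, ∀ i, l i < d + 1 :=
    fun l hl i => Nat.lt_succ_of_le
      ((mem_finsuppAntidiag.1 hl).1 ▸ single_le_sum (by simp) (mem_univ i))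
  rw [coeff_prod, hcomp]
  simp only [geomSeries, coeff_mk]
  refine sum_nbij' (fun k => Finsupp.equivFunOnFinite.symm fun i => (k i : ℕ))
    (fun l i => Fin.ofNat (d + 1) (l i)) ?_ ?_ ?_ ?_ ?_
  · intro k hk
    simpa [mem_finsuppAntidiag] using hk
  · intro l hl
    have hval : ∀ i, l i % (d + 1) = l i := fun i =>
      Nat.mod_eq_of_lt (lt_of_mem l hl i)
    simpa [hval, mem_finsuppAntidiag] using hl
  · intro k _
    ext i
    simp
  · intro l hl
    ext i
    simpa using Nat.mod_eq_of_lt (lt_of_mem l hl i)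
  · intro k _
    simp

theorem hz_eq_coeffZ_prod_geomSeries (N : ℕ) (e : ℤ) (Y : Fin N → R) :
    hz N e Y = coeffZ e (∏ i, geomSeries (Y i)) := by
  rcases lt_or_ge e 0 with he | he
  · rw [hz, if_neg (not_le.mpr he), coeffZ_of_neg he]
  · rw [hz, if_pos he, coeffZ_of_nonneg he, hcomp_eq_coeff_prod_geomSeries]

end CommRing

section Field
variable {K : Type*} [Field K]

theorem coeffZ_geomSeries {d : ℤ} (hd : 0 ≤ d) (a : K) : coeffZ d (geomSeries a) = a ^ d := by
  rw [coeffZ_of_nonneg hd, geomSeries, coeff_mk, ← zpow_natCast, Int.toNat_of_nonneg hd]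

def hSeries (a : K) : K⟦X⟧ := geomSeries a * geomSeries a⁻¹

theorem one_sub_C_mul_X_ne_zero (a : K) : (1 - C a * X : K⟦X⟧) ≠ 0 :=
  left_ne_zero_of_mul_eq_one (one_sub_C_mul_X_mul_geomSeries a)

theorem one_sub_C_mul_X_mul_one_sub_C_inv_mul_X {a : K} (ha : a ≠ 0) :
    (1 - C a * X) * (1 - C a⁻¹ * X) = (1 - C (a + a⁻¹) * X + X ^ 2 : K⟦X⟧) := by
  have hC : C a * C a⁻¹ = (1 : K⟦X⟧) := by rw [← map_mul, mul_inv_cancel₀ ha, map_one]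
  rw [map_add]
  linear_combination X ^ 2 * hC

theorem hSeries_sub_hSeries {a b : K} (ha : a ≠ 0) (hb : b ≠ 0) :
    hSeries a - hSeries b = C (a + a⁻¹ - (b + b⁻¹)) * X * (hSeries a * hSeries b) := by
  have hA : (1 - C (a + a⁻¹) * X + X ^ 2) * hSeries a = 1 := by
    rw [← one_sub_C_mul_X_mul_one_sub_C_inv_mul_X ha, hSeries]
    linear_combination (1 - C a⁻¹ * X) * geomSeries a⁻¹ * one_sub_C_mul_X_mul_geomSeries a +
      one_sub_C_mul_X_mul_geomSeries a⁻¹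
  have hB : (1 - C (b + b⁻¹) * X + X ^ 2) * hSeries b = 1 := by
    rw [← one_sub_C_mul_X_mul_one_sub_C_inv_mul_X hb, hSeries]
    linear_combination (1 - C b⁻¹ * X) * geomSeries b⁻¹ * one_sub_C_mul_X_mul_geomSeries b +
      one_sub_C_mul_X_mul_geomSeries b⁻¹
  refine mul_left_cancel₀ (mul_ne_zero (left_ne_zero_of_mul_eq_one hA)
    (left_ne_zero_of_mul_eq_one hB)) ?_
  rw [map_sub]
  linear_combination (1 - C (b + b⁻¹) * X + X ^ 2) *
      (1 - C (a + a⁻¹) * X * hSeries b + C (b + b⁻¹) * X * hSeries b) * hA -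
    (1 - C (a + a⁻¹) * X + X ^ 2 + C (a + a⁻¹) * X - C (b + b⁻¹) * X) * hB

theorem C_mul_one_add_X_mul_hSeries {a : K} (ha : a ≠ 0) :
    C (1 - a⁻¹) * ((1 + X) * hSeries a) = geomSeries a - C a⁻¹ * geomSeries a⁻¹ := by
  have hC : C a⁻¹ * C a = (1 : K⟦X⟧) := by rw [← map_mul, inv_mul_cancel₀ ha, map_one]
  have hg := one_sub_C_mul_X_mul_geomSeries a
  have hg' := one_sub_C_mul_X_mul_geomSeries a⁻¹
  refine mul_left_cancel₀ (mul_ne_zero (one_sub_C_mul_X_ne_zero a)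
    (one_sub_C_mul_X_ne_zero a⁻¹)) ?_
  rw [hSeries, map_sub, map_one]
  linear_combination (1 - C a⁻¹) * (1 + X) * (1 - C a⁻¹ * X) * geomSeries a⁻¹ * hg
    + (1 - C a⁻¹) * (1 + X) * hg' - (1 - C a⁻¹ * X) * hg
    + C a⁻¹ * (1 - C a * X) * hg' - X * hC

theorem zpow_sub_one_sub_zpow_neg_of_pos {a : K} (ha : a ≠ 0) {m : ℤ} (hm : 0 < m) :
    a ^ (m - 1) - a ^ (-m) =
      (1 - a⁻¹) * (coeffZ (m - 1) (hSeries a) + coeffZ (m - 2) (hSeries a)) := by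
  have h := congrArg (coeffZ (m - 1)) (C_mul_one_add_X_mul_hSeries ha)
  rw [coeffZ_C_mul, add_mul, one_mul, map_add, coeffZ_X_mul, map_sub, coeffZ_C_mul,
    coeffZ_geomSeries (by omega), coeffZ_geomSeries (by omega), inv_zpow',
    ← zpow_neg_one, ← zpow_add₀ ha, show m - 1 - 1 = m - 2 by ring,
    show -1 + -(m - 1) = -m by ring, zpow_neg_one] at h
  exact h.symm

def signedCoeff (F : K⟦X⟧) (s m : ℤ) : K := (m.sign : K) * coeffZ (|m| - s) F

theorem signedCoeff_one_of_nonneg {m : ℤ} (hm : 0 ≤ m) (F : K⟦X⟧) :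
    signedCoeff F 1 m = coeffZ (m - 1) F := by
  rcases hm.eq_or_lt with rfl | hm
  · simp [signedCoeff, coeffZ_of_neg]
  · simp [signedCoeff, Int.sign_eq_one_of_pos hm, abs_of_pos hm]

theorem signedCoeff_one_of_nonpos {m : ℤ} (hm : m ≤ 0) (F : K⟦X⟧) :
    signedCoeff F 1 m = -coeffZ (-m - 1) F := by
  rcases hm.eq_or_lt with rfl | hm
  · simp [signedCoeff, coeffZ_of_neg]
  · simp [signedCoeff, Int.sign_eq_neg_one_of_neg hm, abs_of_neg hm]

theorem zpow_sub_one_sub_zpow_neg {a : K} (ha : a ≠ 0) (m : ℤ) :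
    a ^ (m - 1) - a ^ (-m) =
      (1 - a⁻¹) * (signedCoeff (hSeries a) 1 m + signedCoeff (hSeries a) 1 (m - 1)) := by
  rcases lt_or_ge 0 m with hm | hm
  · rw [signedCoeff_one_of_nonneg hm.le, signedCoeff_one_of_nonneg (by omega),
      zpow_sub_one_sub_zpow_neg_of_pos ha hm, show m - 1 - 1 = m - 2 by ring]
  · have h := zpow_sub_one_sub_zpow_neg_of_pos ha (m := 1 - m) (by omega)
    rw [signedCoeff_one_of_nonpos hm, signedCoeff_one_of_nonpos (by omega),
      show -(m - 1) - 1 = -m by ring]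
    rw [show 1 - m - 1 = -m by ring, show -(1 - m) = m - 1 by ring,
      show 1 - m - 2 = -m - 1 by ring] at h
    linear_combination -h

/-- The `i`-th Newton basis polynomial for the nodes `Y_t = x_t + x_t⁻¹`, evaluated at `Y_k`. -/
def newtonBasis (x : ℕ → K) (i k : ℕ) : K :=
  ∏ t ∈ range i, (x k + (x k)⁻¹ - (x t + (x t)⁻¹))

theorem newtonBasis_succ (x : ℕ → K) (i k : ℕ) :
    newtonBasis x (i + 1) k = newtonBasis x i k * (x k + (x k)⁻¹ - (x i + (x i)⁻¹)) :=
  prod_range_succ _ _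

theorem hSeries_eq_sum_newtonBasis {x : ℕ → K} (hx : ∀ t, x t ≠ 0) (k : ℕ) :
    hSeries (x k) = ∑ i ∈ range (k + 1),
      C (newtonBasis x i k) * X ^ i * ∏ t ∈ range (i + 1), hSeries (x t) := by
  set g : ℕ → K⟦X⟧ := fun i =>
    C (newtonBasis x i k) * X ^ i * ((∏ t ∈ range i, hSeries (x t)) * hSeries (x k))
  have step : ∀ i, g i - g (i + 1) =
      C (newtonBasis x i k) * X ^ i * ∏ t ∈ range (i + 1), hSeries (x t) := by
    intro i
    simp only [g, newtonBasis_succ, prod_range_succ, map_mul, pow_succ]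
    linear_combination (C (newtonBasis x i k) * X ^ i * ∏ t ∈ range i, hSeries (x t)) *
      hSeries_sub_hSeries (hx k) (hx i)
  have g_zero : g 0 = hSeries (x k) := by simp [g, newtonBasis]
  -- the last factor of `newtonBasis x (k + 1) k` is `Y_k - Y_k`
  have g_succ : g (k + 1) = 0 := by simp [g, newtonBasis_succ]
  rw [← sum_congr rfl fun i _ => step i, sum_range_sub', g_zero, g_succ, sub_zero]

theorem signedCoeff_hSeries_eq_sum {x : ℕ → K} (hx : ∀ t, x t ≠ 0) (k : ℕ) (m : ℤ) :
    signedCoeff (hSeries (x k)) 1 m = ∑ i ∈ range (k + 1),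
      newtonBasis x i k * signedCoeff (∏ t ∈ range (i + 1), hSeries (x t)) (i + 1) m := by
  simp only [signedCoeff, hSeries_eq_sum_newtonBasis hx k, map_sum, mul_sum, mul_assoc,
    coeffZ_C_mul, coeffZ_X_pow_mul, sub_sub, add_comm (1 : ℤ)]
  exact sum_congr rfl fun i _ => mul_left_comm _ _ _

theorem one_add_pow_mul_one_add_mul_pow {R : Type*} [CommSemiring R] (w y : R) (j M : ℕ) :
    (1 + y) ^ j * (1 + w * y) ^ M = ∑ p ∈ range (j + 1), ∑ q ∈ range (M + 1),
      w ^ (M - q) * (j.choose p : R) * (M.choose q : R) * y ^ (p + (M - q)) := by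
  rw [add_comm 1 y, add_pow, add_pow, sum_mul_sum]
  refine sum_congr rfl fun p _ => sum_congr rfl fun q _ => ?_
  ring

/-- The entry of the matrix in the row of `x = X_i` and the (0-indexed) column `j`. -/
def matrixEntry (w : K) (n l j : ℕ) (x : K) : K :=
  x ^ (((j : ℤ) + 1) - l - n - 1) * (1 + x) ^ j * (1 + w * x) ^ (n - 1 - j) -
    x ^ (-((j : ℤ) + 1) + l + n) * (1 + x⁻¹) ^ j * (1 + w * x⁻¹) ^ (n - 1 - j)

theorem matrixEntry_eq_sum (w : K) {x : K} (hx : x ≠ 0) {n j : ℕ} (hj : j < n) (l : ℕ) :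
    matrixEntry w n l j x = ∑ p ∈ range (j + 1), ∑ q ∈ range (n - j),
      w ^ (n - 1 - j - q) * (j.choose p : K) * ((n - 1 - j).choose q : K) *
        (x ^ ((p : ℤ) - q - l - 1) - x ^ (-((p : ℤ) - q - l))) := by
  rw [matrixEntry, mul_assoc, mul_assoc, one_add_pow_mul_one_add_mul_pow,
    one_add_pow_mul_one_add_mul_pow, show n - j = n - 1 - j + 1 by omega, mul_sum, mul_sum,
    ← sum_sub_distrib]
  refine sum_congr rfl fun p _ => ?_
  rw [mul_sum, mul_sum, ← sum_sub_distrib]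
  refine sum_congr rfl fun q hq => ?_
  rw [mem_range] at hq
  have h₁ : x ^ (((j : ℤ) + 1) - l - n - 1) * x ^ (p + (n - 1 - j - q)) =
      x ^ ((p : ℤ) - q - l - 1) := by
    rw [← zpow_natCast, ← zpow_add₀ hx]
    congr 1
    omega
  have h₂ : x ^ (-((j : ℤ) + 1) + l + n) * x⁻¹ ^ (p + (n - 1 - j - q)) =
      x ^ (-((p : ℤ) - q - l)) := by
    rw [inv_pow, ← zpow_natCast, ← zpow_neg, ← zpow_add₀ hx]
    congr 1
    omega
  linear_combination (w ^ (n - 1 - j - q) * (j.choose p : K) * ((n - 1 - j).choose q : K)) *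
    (h₁ - h₂)

/-- The paper's `b_(i+1,j+1)` with `X_1, X_2, …` replaced by `x 0, x 1, …`: the product
`∏_(t ≤ i) hSeries (x t)` generates `h_d(x 0, (x 0)⁻¹, …, x i, (x i)⁻¹)`. -/
def bCoeff (x : ℕ → K) (w : K) (n l i j : ℕ) : K :=
  ∑ p ∈ range (j + 1), ∑ q ∈ range (n - j),
    w ^ (n - 1 - j - q) * (j.choose p : K) * ((n - 1 - j).choose q : K) *
      (signedCoeff (∏ t ∈ range (i + 1), hSeries (x t)) (i + 1) ((p : ℤ) - q - l) +
        signedCoeff (∏ t ∈ range (i + 1), hSeries (x t)) (i + 1) ((p : ℤ) - q - l - 1))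

theorem matrixEntry_eq_sum_newtonBasis_mul_bCoeff {x : ℕ → K} (hx : ∀ t, x t ≠ 0) (w : K)
    {n j : ℕ} (hj : j < n) (l k : ℕ) :
    matrixEntry w n l j (x k) =
      (1 - (x k)⁻¹) * ∑ i ∈ range (k + 1), newtonBasis x i k * bCoeff x w n l i j := by
  have split (m : ℤ) : x k ^ (m - 1) - x k ^ (-m) = (1 - (x k)⁻¹) * ∑ i ∈ range (k + 1),
      newtonBasis x i k * (signedCoeff (∏ t ∈ range (i + 1), hSeries (x t)) (i + 1) m +
        signedCoeff (∏ t ∈ range (i + 1), hSeries (x t)) (i + 1) (m - 1)) := by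
    rw [zpow_sub_one_sub_zpow_neg (hx k), signedCoeff_hSeries_eq_sum hx,
      signedCoeff_hSeries_eq_sum hx, ← sum_add_distrib]
    simp only [mul_add]
  rw [matrixEntry_eq_sum w (hx k) hj]
  simp only [bCoeff, split, mul_sum]
  conv_rhs => rw [sum_comm]
  refine sum_congr rfl fun p _ => ?_
  rw [sum_comm]
  exact sum_congr rfl fun q _ => sum_congr rfl fun i _ => by ring

def newtonMatrix (x : ℕ → K) (n : ℕ) : Matrix (Fin n) (Fin n) K :=
  Matrix.of fun k i => if i ≤ k then newtonBasis x i k else 0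

theorem matrix_of_matrixEntry_eq_mul {x : ℕ → K} (hx : ∀ t, x t ≠ 0) (w : K) (n l : ℕ) :
    Matrix.of (fun i j : Fin n => matrixEntry w n l j (x i)) =
      Matrix.diagonal (fun k : Fin n => 1 - (x k)⁻¹) *
        (newtonMatrix x n * Matrix.of (fun i j : Fin n => bCoeff x w n l i j)) := by
  ext k j
  rw [Matrix.diagonal_mul, Matrix.mul_apply, Matrix.of_apply,
    matrixEntry_eq_sum_newtonBasis_mul_bCoeff hx w j.2]
  simp only [newtonMatrix, Matrix.of_apply, ite_mul, zero_mul]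
  rw [← sum_filter, filter_ge_eq_Iic, Nat.range_succ_eq_Iic, ← Fin.map_valEmbedding_Iic,
    sum_map]
  rfl

theorem det_newtonMatrix (x : ℕ → K) (n : ℕ) :
    (newtonMatrix x n).det =
      ∏ i : Fin n, ∏ j ∈ Ioi i, (x j + (x j)⁻¹ - x i - (x i)⁻¹) := by
  have lower : (newtonMatrix x n).IsLowerTriangular := fun k i hki => if_neg (not_le.mpr hki)
  rw [Matrix.det_of_isLowerTriangular _ lower]
  simp only [newtonMatrix, Matrix.of_apply, le_refl, if_true, newtonBasis]
  calc ∏ k : Fin n, ∏ t ∈ range k, (x k + (x k)⁻¹ - (x t + (x t)⁻¹))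
      = ∏ k : Fin n, ∏ i ∈ Iio k, (x k + (x k)⁻¹ - (x i + (x i)⁻¹)) := by
        refine prod_congr rfl fun k _ => ?_
        rw [← Nat.Iio_eq_range, ← Fin.map_valEmbedding_Iio, prod_map]
        rfl
    _ = ∏ i : Fin n, ∏ k ∈ Ioi i, (x k + (x k)⁻¹ - (x i + (x i)⁻¹)) :=
        prod_comm' fun k i => by simp [and_comm]
    _ = _ := by simp only [sub_add_eq_sub_sub]

theorem det_matrixEntry {x : ℕ → K} (hx : ∀ t, x t ≠ 0) (w : K) (n l : ℕ) :
    (Matrix.of fun i j : Fin n => matrixEntry w n l j (x i)).det =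
      (∏ i : Fin n, ∏ j ∈ Ioi i, (x j + (x j)⁻¹ - x i - (x i)⁻¹)) *
        (∏ i : Fin n, (1 - (x i)⁻¹)) *
        (Matrix.of fun i j : Fin n => bCoeff x w n l i j).det := by
  rw [matrix_of_matrixEntry_eq_mul hx, Matrix.det_mul, Matrix.det_mul, Matrix.det_diagonal,
    det_newtonMatrix]
  ring

end Field

theorem prod_range_two_mul {M : Type*} [CommMonoid M] (f : ℕ → M) (r : ℕ) :
    ∏ u ∈ range (2 * r), f u = ∏ t ∈ range r, (f (2 * t) * f (2 * t + 1)) := by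
  induction r with
  | zero => simp
  | succ r ih =>
    rw [show 2 * (r + 1) = 2 * r + 1 + 1 by ring, prod_range_succ, prod_range_succ, ih,
      prod_range_succ, mul_assoc]

theorem Xv_ne_zero (n : ℕ) (i : Fin n) : Xv n i ≠ 0 :=
  (map_ne_zero_iff _ (IsFractionRing.injective _ _)).2 (MvPolynomial.X_ne_zero _)

def xseq (n t : ℕ) : RF n := if h : t < n then Xv n ⟨t, h⟩ else 1

theorem xseq_val (n : ℕ) (i : Fin n) : xseq n i = Xv n i := dif_pos i.2

theorem xseq_ne_zero (n t : ℕ) : xseq n t ≠ 0 := by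
  unfold xseq
  split
  · exact Xv_ne_zero n _
  · exact one_ne_zero

theorem prod_geomSeries_args (n i : ℕ) (hi : i < n) :
    ∏ t, geomSeries (args n i hi t) = ∏ t ∈ range (i + 1), hSeries (xseq n t) := by
  have args_eq (t : Fin (2 * (i + 1))) : args n i hi t =
      if t.val % 2 = 0 then xseq n (t / 2) else (xseq n (t / 2))⁻¹ := by
    simp only [args, xseq, dif_pos (by omega : t.val / 2 < n)]
  simp only [args_eq]
  rw [Fin.prod_univ_eq_prod_range
    (fun u => geomSeries (if u % 2 = 0 then xseq n (u / 2) else (xseq n (u / 2))⁻¹)),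
    prod_range_two_mul]
  refine prod_congr rfl fun t _ => ?_
  simp [hSeries, show (2 * t + 1) / 2 = t by omega]

theorem bent_eq_bCoeff (n l : ℕ) (i j : Fin n) :
    bent n l i j = bCoeff (xseq n) (wv n) n l i j := by
  simp only [bent, bCoeff, signedCoeff, hz_eq_coeffZ_prod_geomSeries, prod_geomSeries_args,
    Int.natCast_natAbs]

theorem stmt_10_general (n l : ℕ) :
    (Matrix.of fun i j : Fin n =>
        Xv n i ^ ((((j : ℕ) : ℤ) + 1) - l - n - 1) * (1 + Xv n i) ^ (j : ℕ) *
            (1 + wv n * Xv n i) ^ (n - 1 - (j : ℕ)) -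
          Xv n i ^ (-(((j : ℕ) : ℤ) + 1) + l + n) * (1 + (Xv n i)⁻¹) ^ (j : ℕ) *
            (1 + wv n * (Xv n i)⁻¹) ^ (n - 1 - (j : ℕ))).det =
    (∏ i : Fin n, ∏ j ∈ Finset.Ioi i,
        (Xv n j + (Xv n j)⁻¹ - Xv n i - (Xv n i)⁻¹)) *
      (∏ i : Fin n, (1 - (Xv n i)⁻¹)) *
      (Matrix.of fun i j : Fin n => bent n l i j).det := by
  simp only [bent_eq_bCoeff, ← xseq_val]
  exact det_matrixEntry (xseq_ne_zero n) (wv n) n l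

/-- First proof of Theorem 3.2, even case: rewriting the determinant via complete
homogeneous symmetric functions. -/
theorem stmt_10 (n l : ℕ) (hn : 1 ≤ n) :
    (Matrix.of fun i j : Fin n =>
        Xv n i ^ ((((j : ℕ) : ℤ) + 1) - l - n - 1) * (1 + Xv n i) ^ (j : ℕ) *
            (1 + wv n * Xv n i) ^ (n - 1 - (j : ℕ)) -
          Xv n i ^ (-(((j : ℕ) : ℤ) + 1) + l + n) * (1 + (Xv n i)⁻¹) ^ (j : ℕ) *
            (1 + wv n * (Xv n i)⁻¹) ^ (n - 1 - (j : ℕ))).det =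
    (∏ i : Fin n, ∏ j ∈ Finset.Ioi i,
        (Xv n j + (Xv n j)⁻¹ - Xv n i - (Xv n i)⁻¹)) *
      (∏ i : Fin n, (1 - (Xv n i)⁻¹)) *
      (Matrix.of fun i j : Fin n => bent n l i j).det :=
  stmt_10_general n l
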